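/- Let ε ∈ [0,1]. Then for every x ∈ (0, π), x·((1 − √ε)/(2·sin²(x/2)))^{1/(x·cot(x/2))} ≤ arccos(√ε). Moreover, if ε < 1, then at x = arccos(√ε) the left-hand side equals arccos(√ε), so the supremum of the left-hand side over x ∈ (0, π) equals arccos(√ε) and is attained at x = arccos(√ε). -/

import Mathlib

/-!
Put `a = arccos √ε`, so that `1 - √ε = 2 sin² (a / 2)`, and `c = x cot (x / 2)`. Taking logarithms,
`Lfun ε x ≤ a` becomes `log sin² (a / 2) - c log a ≤ log sin² (x / 2) - c log x`. The function
`t ↦ log sin² (t / 2) - c log t` has derivative `(t cot (t / 2) - c) / t`, which vanishes at `t = x`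
and changes sign from `+` to `-` there because `t cot (t / 2)` is decreasing on `(0, π)`; so `x` is its
maximum on `(0, π)`. At `x = a` the base of the power is `1`, whence `Lfun ε a = a`.
-/

/-- The function `x ↦ x·((1 − √ε)/(2·sin²(x/2)))^{1/(x·cot(x/2))}`. -/
noncomputable def Lfun (ε x : ℝ) : ℝ :=
  x * ((1 - Real.sqrt ε) / (2 * Real.sin (x / 2) ^ 2)) ^
    (1 / (x * (Real.cos (x / 2) / Real.sin (x / 2))))

open Real Set

lemma sin_half_pos {x : ℝ} (hx : x ∈ Ioo 0 (2 * π)) : 0 < sin (x / 2) :=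
  sin_pos_of_pos_of_lt_pi (by linarith [hx.1]) (by linarith [hx.2])

lemma two_mul_sin_half_sq (x : ℝ) : 2 * sin (x / 2) ^ 2 = 1 - cos x := by
  have := sin_sq_eq_half_sub (x / 2)
  rw [show 2 * (x / 2) = x by ring] at this
  linarith

lemma mul_cot_half_pos {x : ℝ} (hx : x ∈ Ioo 0 π) : 0 < x * cot (x / 2) := by
  have hcos : 0 < cos (x / 2) :=
    cos_pos_of_mem_Ioo ⟨by linarith [hx.1, pi_pos], by linarith [hx.2]⟩
  have hsin := sin_half_pos ⟨hx.1, by linarith [hx.2, pi_pos]⟩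
  rw [cot_eq_cos_div_sin]
  exact mul_pos hx.1 (div_pos hcos hsin)

lemma hasDerivAt_mul_cot_half {t : ℝ} (ht : sin (t / 2) ≠ 0) :
    HasDerivAt (fun t ↦ t * cot (t / 2)) ((sin t - t) / (2 * sin (t / 2) ^ 2)) t := by
  simp only [cot_eq_cos_div_sin]
  have hhalf : HasDerivAt (fun t : ℝ ↦ t / 2) (1 / 2) t := (hasDerivAt_id t).div_const 2
  refine ((hasDerivAt_id t).fun_mul (((hasDerivAt_cos _).comp t hhalf).fun_div
    ((hasDerivAt_sin _).comp t hhalf) ht)).congr_deriv ?_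
  simp only [Function.comp_apply, id]
  rw [show sin t = sin (2 * (t / 2)) by ring_nf, sin_two_mul]
  field_simp
  linear_combination (-t) * sin_sq_add_cos_sq (t / 2)

lemma strictAntiOn_mul_cot_half : StrictAntiOn (fun t ↦ t * cot (t / 2)) (Ioo 0 π) := by
  have hderiv : ∀ t ∈ Ioo 0 π, HasDerivAt (fun t ↦ t * cot (t / 2)) _ t := fun t ht ↦
    hasDerivAt_mul_cot_half (sin_half_pos ⟨ht.1, by linarith [ht.2, pi_pos]⟩).ne'
  refine strictAntiOn_of_deriv_neg (convex_Ioo 0 π)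
    (fun t ht ↦ (hderiv t ht).continuousAt.continuousWithinAt) fun t ht ↦ ?_
  rw [interior_Ioo] at ht
  rw [(hderiv t ht).deriv]
  have := sin_half_pos ⟨ht.1, by linarith [ht.2, pi_pos]⟩
  exact div_neg_of_neg_of_pos (by linarith [sin_lt ht.1]) (by positivity)

lemma hasDerivAt_log_sin_half_sq {t : ℝ} (ht : sin (t / 2) ≠ 0) :
    HasDerivAt (fun t ↦ log (sin (t / 2) ^ 2)) (cot (t / 2)) t := by
  have hhalf : HasDerivAt (fun t : ℝ ↦ t / 2) (1 / 2) t := (hasDerivAt_id t).div_const 2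
  refine ((((hasDerivAt_sin _).comp t hhalf).fun_pow 2).log (pow_ne_zero 2 ht)).congr_deriv ?_
  rw [cot_eq_cos_div_sin]
  simp only [Function.comp_apply]
  field_simp
  ring

lemma isMaxOn_log_sin_half_sq_sub_mul_log {x : ℝ} (hx : x ∈ Ioo 0 π) :
    IsMaxOn (fun t ↦ log (sin (t / 2) ^ 2) - x * cot (x / 2) * log t) (Ioo 0 π) x := by
  have hderiv : ∀ t ∈ Ioo 0 π, HasDerivAt (fun t ↦ log (sin (t / 2) ^ 2) - x * cot (x / 2) * log t)
      ((t * cot (t / 2) - x * cot (x / 2)) / t) t := by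
    intro t ht
    refine ((hasDerivAt_log_sin_half_sq (sin_half_pos ⟨ht.1, by linarith [ht.2, pi_pos]⟩).ne').sub
      ((hasDerivAt_log ht.1.ne').const_mul _)).congr_deriv ?_
    field_simp [ht.1.ne']
  have hanti := strictAntiOn_mul_cot_half.antitoneOn
  refine isMaxOn_Ioo_of_deriv (hderiv x hx).continuousAt
    (fun t ht ↦ (hderiv t ⟨ht.1, ht.2.trans hx.2⟩).differentiableAt.differentiableWithinAt)
    (fun t ht ↦ (hderiv t ⟨hx.1.trans ht.1, ht.2⟩).differentiableAt.differentiableWithinAt)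
    (fun t ht ↦ ?_) (fun t ht ↦ ?_)
  · rw [(hderiv t ⟨ht.1, ht.2.trans hx.2⟩).deriv]
    exact div_nonneg (sub_nonneg.2 (hanti ⟨ht.1, ht.2.trans hx.2⟩ hx ht.2.le)) ht.1.le
  · rw [(hderiv t ⟨hx.1.trans ht.1, ht.2⟩).deriv]
    exact div_nonpos_of_nonpos_of_nonneg (sub_nonpos.2 (hanti hx ⟨hx.1.trans ht.1, ht.2⟩ ht.1.le))
      (hx.1.trans ht.1).le

lemma mul_rpow_one_div_mul_cot_half_le {a x : ℝ} (ha : a ∈ Ioo 0 π) (hx : x ∈ Ioo 0 π) :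
    x * ((1 - cos a) / (2 * sin (x / 2) ^ 2)) ^ (1 / (x * cot (x / 2))) ≤ a := by
  have hsa := sin_half_pos ⟨ha.1, by linarith [ha.2, pi_pos]⟩
  have hsx := sin_half_pos ⟨hx.1, by linarith [hx.2, pi_pos]⟩
  rw [← two_mul_sin_half_sq, mul_div_mul_left _ _ two_ne_zero]
  have hc := mul_cot_half_pos hx
  set c := x * cot (x / 2)
  set b := sin (a / 2) ^ 2 / sin (x / 2) ^ 2
  have hlog : log b / c ≤ log a - log x := by
    rw [div_le_iff₀ hc, log_div (by positivity) (by positivity)]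
    linarith [isMaxOn_iff.1 (isMaxOn_log_sin_half_sq_sub_mul_log hx) a ha]
  calc x * b ^ (1 / c) = exp (log x + log b / c) := by
        rw [rpow_def_of_pos (by positivity), exp_add, exp_log hx.1, mul_one_div]
    _ ≤ exp (log a) := exp_le_exp.2 (by linarith)
    _ = a := exp_log ha.1

lemma Lfun_eq (ε x : ℝ) :
    Lfun ε x = x * ((1 - √ε) / (2 * sin (x / 2) ^ 2)) ^ (1 / (x * cot (x / 2))) := by
  rw [Lfun, cot_eq_cos_div_sin]

lemma Lfun_le_of_sqrt_eq_cos {ε a x : ℝ} (ha : a ∈ Ioo 0 π) (hx : x ∈ Ioo 0 π)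
    (h : √ε = cos a) : Lfun ε x ≤ a := by
  rw [Lfun_eq, h]
  exact mul_rpow_one_div_mul_cot_half_le ha hx

lemma Lfun_self_of_sqrt_eq_cos {ε a : ℝ} (ha : a ∈ Ioo 0 π) (h : √ε = cos a) :
    Lfun ε a = a := by
  have hsa := sin_half_pos ⟨ha.1, by linarith [ha.2, pi_pos]⟩
  rw [Lfun, h, ← two_mul_sin_half_sq, div_self (by positivity), one_rpow, mul_one]

lemma Lfun_one {x : ℝ} (hx : x ∈ Ioo 0 π) : Lfun 1 x = 0 := by
  rw [Lfun_eq, sqrt_one, sub_self, zero_div, zero_rpow (one_div_pos.2 (mul_cot_half_pos hx)).ne',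
    mul_zero]

theorem stmt10 (ε : ℝ) (hε : ε ∈ Set.Icc (0 : ℝ) 1) :
    (∀ x ∈ Set.Ioo (0 : ℝ) Real.pi, Lfun ε x ≤ Real.arccos (Real.sqrt ε)) ∧
    (ε < 1 → Lfun ε (Real.arccos (Real.sqrt ε)) = Real.arccos (Real.sqrt ε)) ∧
    (ε < 1 →
      IsGreatest (Lfun ε '' Set.Ioo (0 : ℝ) Real.pi) (Real.arccos (Real.sqrt ε))) := by
  have hcos : √ε = cos (arccos √ε) :=
    (cos_arccos (by linarith [sqrt_nonneg ε]) (sqrt_le_one.2 hε.2)).symm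
  have hmem (h : ε < 1) : arccos √ε ∈ Ioo 0 π :=
    ⟨arccos_pos.2 ((sqrt_lt' one_pos).2 (by rwa [one_pow])),
      arccos_lt_pi.2 (by linarith [sqrt_nonneg ε])⟩
  have hself (h : ε < 1) := Lfun_self_of_sqrt_eq_cos (hmem h) hcos
  have hle : ∀ x ∈ Ioo 0 π, Lfun ε x ≤ arccos √ε := by
    intro x hx
    rcases hε.2.lt_or_eq with h | rfl
    · exact Lfun_le_of_sqrt_eq_cos (hmem h) hx hcos
    · rw [Lfun_one hx, sqrt_one, arccos_one]
  exact ⟨hle, hself, fun h ↦ ⟨⟨_, hmem h, hself h⟩, by rintro _ ⟨x, hx, rfl⟩; exact hle x hx⟩⟩
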